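/- Let ℓ_d and ℓ_r be real symmetric positive semidefinite q×q matrices with ℓ_d𝟙 = 0 and ℓ_r𝟙 = 0, where 𝟙 is the all-ones vector. If the complex matrix ℓ_d + iℓ_r has exactly one eigenvalue (counted with multiplicity) on the imaginary axis, then for all positive scalars α, β the matrix αℓ_d + iβℓ_r also has exactly one eigenvalue on the imaginary axis. -/

import Mathlib

open Matrix

open scoped Classical in
/-- The number of eigenvalues (with algebraic multiplicity) of a complex matrix that lie
on the imaginary axis, i.e. the number of roots of the characteristic polynomial with
zero real part. -/
noncomputable def imagAxisEigCount {q : ℕ} (A : Matrix (Fin q) (Fin q) ℂ) : ℕ :=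
  (A.charpoly.roots.filter (fun z => z.re = 0)).card

/-!
Let `L`, `R` be the complexifications of `ℓ_d`, `ℓ_r`, and let `iβν` be a point of the
imaginary axis. Then `αL + iβR - iβν = αL + iβ(R - ν)`, and since `x* L x ≥ 0` while
`x* (R - ν) x` is real, this matrix kills `x` iff `L x = 0` and `R x = ν x`. So its kernel
equals the kernel of its adjoint `αL - iβ(R - ν)`, which makes the eigenvalue `iβν`
semisimple: its algebraic multiplicity is `dim (ker L ∩ ker (R - ν))`, independent of `α`
and `β`. Hence the imaginary-axis spectrum of `αL + iβR` is that of `L + iR` scaled by `β`,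
multiplicities included.
-/

open Complex Module
open scoped ComplexOrder

lemma Module.End.maxGenEigenspace_zero_eq_ker {R M : Type*} [CommRing R] [AddCommGroup M]
    [Module R M] {f : End R M} (hf : ∀ x, f (f x) = 0 → f x = 0) :
    f.maxGenEigenspace 0 = LinearMap.ker f := by
  ext x
  simp only [mem_maxGenEigenspace, zero_smul, sub_zero, LinearMap.mem_ker]
  refine ⟨?_, fun hx => ⟨1, by rwa [pow_one]⟩⟩
  rintro ⟨k, hk⟩
  induction k generalizing x with
  | zero => simp_all
  | succ k ih => exact hf x (ih (f x) (by rwa [← mul_apply, ← pow_succ]))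

namespace Matrix

variable {n : Type*}

lemma IsSymm.isHermitian_map_ofReal {A : Matrix n n ℝ} (hA : A.IsSymm) :
    (A.map ofReal).IsHermitian :=
  IsHermitian.map ((conjTranspose_eq_transpose_of_trivial A).trans hA) ofReal
    fun x => (conj_ofReal x).symm

variable [Fintype n]

lemma PosSemidef.map_ofReal {A : Matrix n n ℝ} (hA : A.PosSemidef) :
    (A.map ofReal).PosSemidef := by
  classical
  open scoped MatrixOrder in
  obtain ⟨B, rfl⟩ := CStarAlgebra.nonneg_iff_eq_star_mul_self.mp hA.nonneg
  have hmap : (star B * B).map ofReal = (B.map ofReal)ᴴ * B.map ofReal := by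
    ext i j
    simp [mul_apply]
  rw [hmap]
  exact posSemidef_conjTranspose_mul_self _

lemma mulVec_eq_zero_of_mulVec_mulVec_eq_zero {𝕜 : Type*} [RCLike 𝕜] {N : Matrix n n 𝕜}
    (hN : ∀ x, N *ᵥ x = 0 → Nᴴ *ᵥ x = 0) {y : n → 𝕜} (hy : N *ᵥ (N *ᵥ y) = 0) :
    N *ᵥ y = 0 := by
  have hstar : star (N *ᵥ y) ᵥ* N = 0 := by
    simpa [star_mulVec] using congrArg star (hN _ hy)
  refine dotProduct_star_self_eq_zero.mp ?_
  rw [dotProduct_mulVec, hstar, zero_dotProduct]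

lemma PosSemidef.add_I_smul_mulVec_eq_zero_iff {A C : Matrix n n ℂ} (hA : A.PosSemidef)
    (hC : C.IsHermitian) {x : n → ℂ} :
    (A + I • C) *ᵥ x = 0 ↔ A *ᵥ x = 0 ∧ C *ᵥ x = 0 := by
  refine ⟨fun h => ?_, fun ⟨hAx, hCx⟩ => by simp [add_mulVec, smul_mulVec, hAx, hCx]⟩
  have hform : star x ⬝ᵥ A *ᵥ x + I * (star x ⬝ᵥ C *ᵥ x) = 0 := by
    simpa [add_mulVec, smul_mulVec, dotProduct_add, dotProduct_smul] using
      congrArg (star x ⬝ᵥ ·) h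
  have hAim : (star x ⬝ᵥ A *ᵥ x).im = 0 := hA.isHermitian.im_star_dotProduct_mulVec_self x
  have hCim : (star x ⬝ᵥ C *ᵥ x).im = 0 := hC.im_star_dotProduct_mulVec_self x
  -- both quadratic forms are real, so the real part of `hform` is the `A`-form alone
  have hAx : A *ᵥ x = 0 := by
    refine (hA.dotProduct_mulVec_zero_iff x).mp (Complex.ext ?_ hAim)
    simpa [hCim] using congrArg re hform
  rw [add_mulVec, hAx, zero_add, smul_mulVec, smul_eq_zero] at h
  exact ⟨hAx, h.resolve_left I_ne_zero⟩

variable [DecidableEq n]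

lemma rootMultiplicity_zero_charpoly_sub_smul_one {K : Type*} [Field K] (M : Matrix n n K)
    (μ : K) : (M - μ • 1).charpoly.rootMultiplicity 0 = M.charpoly.rootMultiplicity μ := by
  rw [← charpoly_toLin', ← charpoly_toLin', ← LinearMap.finrank_maxGenEigenspace_eq,
    ← LinearMap.finrank_maxGenEigenspace_eq,
    End.maxGenEigenspace_eq_maxGenEigenspace_zero (toLin' M), map_sub, map_smul, toLin'_one,
    End.one_eq_id]

lemma PosSemidef.rootMultiplicity_zero_charpoly_add_I_smul {A C : Matrix n n ℂ}
    (hA : A.PosSemidef) (hC : C.IsHermitian) :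
    (A + I • C).charpoly.rootMultiplicity 0 =
      finrank ℂ ↥(LinearMap.ker (toLin' A) ⊓ LinearMap.ker (toLin' C)) := by
  have hker (x : n → ℂ) := hA.add_I_smul_mulVec_eq_zero_iff hC (x := x)
  have hadj (x : n → ℂ) (hx : (A + I • C) *ᵥ x = 0) : (A + I • C)ᴴ *ᵥ x = 0 := by
    obtain ⟨hAx, hCx⟩ := (hker x).mp hx
    simp [hA.isHermitian.eq, hC.eq, add_mulVec, neg_mulVec, smul_mulVec, hAx, hCx]
  have hkerN : LinearMap.ker (toLin' (A + I • C)) =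
      LinearMap.ker (toLin' A) ⊓ LinearMap.ker (toLin' C) := by
    ext x
    simp only [LinearMap.mem_ker, Submodule.mem_inf, toLin'_apply, hker]
  rw [← charpoly_toLin', ← LinearMap.finrank_maxGenEigenspace_eq,
    End.maxGenEigenspace_zero_eq_ker fun y => by
      simpa only [toLin'_apply] using mulVec_eq_zero_of_mulVec_mulVec_eq_zero hadj, hkerN]

lemma PosSemidef.rootMultiplicity_charpoly_smul_add_I_smul {A B : Matrix n n ℂ}
    (hA : A.PosSemidef) (hB : B.IsHermitian) {α β : ℝ} (hα : 0 < α) (hβ : β ≠ 0) (ν : ℝ) :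
    (α • A + I • β • B).charpoly.rootMultiplicity (I * (β * ν)) =
      finrank ℂ ↥(LinearMap.ker (toLin' A) ⊓ End.eigenspace (toLin' B) ν) := by
  have hshift :
      α • A + I • β • B - (I * (β * ν)) • 1 = α • A + I • β • (B - (ν : ℂ) • 1) := by
    module
  have hBν : (β • (B - (ν : ℂ) • 1)).IsHermitian :=
    (hB.sub (isHermitian_one.smul ((im_eq_zero_iff_isSelfAdjoint _).mp (ofReal_im ν)))).smul
      (.all β)
  have hker :
      LinearMap.ker (toLin' (α • A)) ⊓ LinearMap.ker (toLin' (β • (B - (ν : ℂ) • 1))) =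
        LinearMap.ker (toLin' A) ⊓ End.eigenspace (toLin' B) ν := by
    ext x
    simp [hα.ne', hβ, sub_eq_zero, smul_mulVec, sub_mulVec]
  rw [← rootMultiplicity_zero_charpoly_sub_smul_one, hshift,
    (hA.smul hα.le).rootMultiplicity_zero_charpoly_add_I_smul hBν, hker]

end Matrix

section imagAxisRoots

variable {n : Type*} [Fintype n] [DecidableEq n]

open scoped Classical in
noncomputable def imagAxisRoots (A : Matrix n n ℂ) : Multiset ℂ :=
  A.charpoly.roots.filter (fun z => z.re = 0)

lemma card_imagAxisRoots {q : ℕ} (A : Matrix (Fin q) (Fin q) ℂ) :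
    Multiset.card (imagAxisRoots A) = imagAxisEigCount A :=
  rfl

variable {L R : Matrix n n ℂ} {α β : ℝ}

lemma count_mul_imagAxisRoots (hL : L.PosSemidef) (hR : R.IsHermitian) (hα : 0 < α)
    (hβ : β ≠ 0) (w : ℂ) :
    (imagAxisRoots (α • L + I • β • R)).count (β * w) =
      if w.re = 0 then finrank ℂ ↥(LinearMap.ker (toLin' L) ⊓ End.eigenspace (toLin' R) w.im)
      else 0 := by
  have hre : (β * w : ℂ).re = 0 ↔ w.re = 0 := by simp [hβ]
  rw [imagAxisRoots, Multiset.count_filter, Polynomial.count_roots]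
  by_cases hw : w.re = 0
  · have hw' : (β * w : ℂ) = I * (β * w.im) := by
      apply Complex.ext <;> simp [hw]
    rw [if_pos (hre.mpr hw), if_pos hw, hw',
      hL.rootMultiplicity_charpoly_smul_add_I_smul hR hα hβ]
  · rw [if_neg (hre.not.mpr hw), if_neg hw]

lemma imagAxisRoots_smul_add_I_smul (hL : L.PosSemidef) (hR : R.IsHermitian) (hα : 0 < α)
    (hβ : β ≠ 0) :
    imagAxisRoots (α • L + I • β • R) = (imagAxisRoots (L + I • R)).map ((β : ℂ) * ·) := by
  ext z
  obtain ⟨w, rfl⟩ : ∃ w, z = β * w := ⟨z / β, by field_simp⟩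
  rw [Multiset.count_map_eq_count' _ _ (mul_right_injective₀ (ofReal_ne_zero.mpr hβ)),
    count_mul_imagAxisRoots hL hR hα hβ]
  simpa using (count_mul_imagAxisRoots hL hR one_pos one_ne_zero w).symm

end imagAxisRoots

theorem scaled_laplacian_pair_single_imaginary_eigenvalue_general
    (q : ℕ) (ld lr : Matrix (Fin q) (Fin q) ℝ)
    (hlr_symm : lrᵀ = lr)
    (hld : ld.PosSemidef)
    (hcount : imagAxisEigCount (ld.map Complex.ofReal + Complex.I • lr.map Complex.ofReal) = 1) :
    ∀ α β : ℝ, 0 < α → 0 < β →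
      imagAxisEigCount
        ((α • ld).map Complex.ofReal + Complex.I • (β • lr).map Complex.ofReal) = 1 := by
  intro α β hα hβ
  have hscale : (α • ld).map ofReal + I • (β • lr).map ofReal =
      α • ld.map ofReal + I • β • lr.map ofReal := by
    ext i j
    simp
  rw [← card_imagAxisRoots] at hcount ⊢
  rw [hscale, imagAxisRoots_smul_add_I_smul hld.map_ofReal
    (IsSymm.isHermitian_map_ofReal hlr_symm) hα hβ.ne', Multiset.card_map, hcount]

/-- If `ℓ_d + i ℓ_r` (with `ℓ_d, ℓ_r` scalar Laplacians) has exactly one eigenvalue on the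
imaginary axis, then so does `α ℓ_d + i β ℓ_r` for all positive scalars `α, β`. -/
theorem scaled_laplacian_pair_single_imaginary_eigenvalue
    (q : ℕ) (ld lr : Matrix (Fin q) (Fin q) ℝ)
    (hld_symm : ldᵀ = ld) (hlr_symm : lrᵀ = lr)
    (hld : ld.PosSemidef) (hlr : lr.PosSemidef)
    (hld1 : ld *ᵥ (fun _ => (1 : ℝ)) = 0) (hlr1 : lr *ᵥ (fun _ => (1 : ℝ)) = 0)
    (hcount : imagAxisEigCount (ld.map Complex.ofReal + Complex.I • lr.map Complex.ofReal) = 1) :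
    ∀ α β : ℝ, 0 < α → 0 < β →
      imagAxisEigCount
        ((α • ld).map Complex.ofReal + Complex.I • (β • lr).map Complex.ofReal) = 1 :=
  scaled_laplacian_pair_single_imaginary_eigenvalue_general q ld lr hlr_symm hld hcount
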